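/- arXiv:2310.10807 — 7 statements merged into one kernel-verified Lean document; each statement's English description precedes it below -/
import Mathlib

section
/- For any vectors x, θ in ℝ^p, any y ∈ ℝ, and any δ ≥ 0, the maximum of |y - (x + Δx)ᵀθ|² over all Δx with ‖Δx‖ ≤ δ equals (|y - xᵀθ| + δ‖θ‖_*)², where ‖·‖_* is the dual norm of ‖·‖. -/
/-!
Equip `ℝ^p` with the norm `N`. The dual norm of `θ` is then the operator norm of the functional
`Δ ↦ θ ⬝ᵥ Δ`, and it is attained on the unit ball because that ball is compact. The residual
`y - (x + Δ) ⬝ᵥ θ = r - θ ⬝ᵥ Δ`, with `r = y - x ⬝ᵥ θ`, moves away from `r` by at most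
`δ ‖θ‖_*`, and moving by `δ` along a maximiser in the direction of the sign of `r` attains this.
-/

open Matrix

/-- The dual norm `‖θ‖_* = sup_{‖x‖ ≤ 1} |θᵀx|` of a norm `N` on `ℝ^p`. -/
noncomputable def dualNorm {p : ℕ} (N : (Fin p → ℝ) → ℝ) (θ : Fin p → ℝ) : ℝ :=
  sSup {v | ∃ x : Fin p → ℝ, N x ≤ 1 ∧ v = |θ ⬝ᵥ x|}

open Metric

namespace ContinuousLinearMap

variable {E : Type*} [NormedAddCommGroup E] [NormedSpace ℝ E] (f : E →L[ℝ] ℝ)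

theorem sSup_abs_apply_unitClosedBall_eq_norm :
    sSup {v | ∃ x : E, ‖x‖ ≤ 1 ∧ v = |f x|} = ‖f‖ := by
  convert f.sSup_unitClosedBall_eq_norm using 2
  ext v
  simp [eq_comm]

theorem exists_norm_le_one_apply_eq_norm [ProperSpace E] : ∃ u : E, ‖u‖ ≤ 1 ∧ f u = ‖f‖ := by
  obtain ⟨u, hu, hfu⟩ : ‖f‖ ∈ (fun x => ‖f x‖) '' closedBall 0 1 := by
    rw [← f.sSup_unitClosedBall_eq_norm]
    exact ((isCompact_closedBall 0 1).image (by fun_prop)).sSup_mem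
      ((nonempty_closedBall.mpr zero_le_one).image _)
  rw [mem_closedBall_zero_iff] at hu
  rcases abs_choice (f u) with h | h
  · exact ⟨u, hu, by rwa [← h]⟩
  · exact ⟨-u, by rwa [norm_neg], by rw [map_neg, ← h]; exact hfu⟩

theorem isGreatest_sq_sub_apply {u : E} (hu : ‖u‖ ≤ 1) (hfu : f u = ‖f‖) (r : ℝ) {δ : ℝ}
    (hδ : 0 ≤ δ) :
    IsGreatest {v | ∃ Δ : E, ‖Δ‖ ≤ δ ∧ v = (r - f Δ) ^ 2} ((|r| + δ * ‖f‖) ^ 2) := by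
  have hδu : ‖δ • u‖ ≤ δ := by
    rw [norm_smul, Real.norm_of_nonneg hδ]
    exact mul_le_of_le_one_right hδ hu
  refine ⟨?_, ?_⟩
  · rcases le_or_gt 0 r with hr | hr
    · refine ⟨-(δ • u), by rwa [norm_neg], ?_⟩
      rw [map_neg, map_smul, hfu, abs_of_nonneg hr, smul_eq_mul]
      ring
    · refine ⟨δ • u, hδu, ?_⟩
      rw [map_smul, hfu, abs_of_neg hr, smul_eq_mul]
      ring
  · rintro v ⟨Δ, hΔ, rfl⟩
    have habs : |r - f Δ| ≤ |r| + δ * ‖f‖ :=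
      calc |r - f Δ| ≤ |r| + |f Δ| := abs_sub _ _
        _ ≤ |r| + ‖f‖ * ‖Δ‖ := by gcongr; exact f.le_opNorm Δ
        _ ≤ |r| + δ * ‖f‖ := by rw [mul_comm]; gcongr
    rw [← sq_abs]
    gcongr

end ContinuousLinearMap

/-- `Fin p → ℝ` with the sup norm replaced by `N`; the parameter only selects the norm. -/
def WithNormFun {p : ℕ} (_N : (Fin p → ℝ) → ℝ) : Type := Fin p → ℝ

namespace WithNormFun

variable {p : ℕ} (N : (Fin p → ℝ) → ℝ)

instance : AddCommGroup (WithNormFun N) := inferInstanceAs (AddCommGroup (Fin p → ℝ))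

noncomputable instance : Module ℝ (WithNormFun N) := inferInstanceAs (Module ℝ (Fin p → ℝ))

instance : FiniteDimensional ℝ (WithNormFun N) :=
  inferInstanceAs (FiniteDimensional ℝ (Fin p → ℝ))

instance : Norm (WithNormFun N) := ⟨N⟩

theorem normedSpaceCore (hN_eq : ∀ v, N v = 0 ↔ v = 0)
    (hN_smul : ∀ (a : ℝ) v, N (a • v) = |a| * N v)
    (hN_add : ∀ v w, N (v + w) ≤ N v + N w) : NormedSpace.Core ℝ (WithNormFun N) where
  norm_nonneg (v : Fin p → ℝ) := by
    have h := hN_add v ((-1 : ℝ) • v)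
    rw [hN_smul, neg_one_smul, add_neg_cancel, (hN_eq 0).2 rfl, abs_neg, abs_one, one_mul] at h
    change 0 ≤ N v
    linarith
  norm_smul := hN_smul
  norm_triangle := hN_add
  norm_eq_zero_iff := hN_eq

end WithNormFun

theorem stmt0 {p : ℕ} (N : (Fin p → ℝ) → ℝ)
    (hN_eq : ∀ v, N v = 0 ↔ v = 0)
    (hN_smul : ∀ (a : ℝ) v, N (a • v) = |a| * N v)
    (hN_add : ∀ v w, N (v + w) ≤ N v + N w)
    (x θ : Fin p → ℝ) (y δ : ℝ) (hδ : 0 ≤ δ) :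
    IsGreatest {v | ∃ Δx : Fin p → ℝ, N Δx ≤ δ ∧ v = (y - (x + Δx) ⬝ᵥ θ) ^ 2}
      ((|y - x ⬝ᵥ θ| + δ * dualNorm N θ) ^ 2) := by
  have core := WithNormFun.normedSpaceCore N hN_eq hN_smul hN_add
  let := NormedAddCommGroup.ofCore core
  let := NormedSpace.ofCore core
  let f : WithNormFun N →L[ℝ] ℝ := LinearMap.toContinuousLinearMap (dotProductBilin ℝ ℝ θ)
  have hD : dualNorm N θ = ‖f‖ := f.sSup_abs_apply_unitClosedBall_eq_norm
  obtain ⟨u, hu, hfu⟩ := f.exists_norm_le_one_apply_eq_norm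
  have hset : {v | ∃ Δx : Fin p → ℝ, N Δx ≤ δ ∧ v = (y - (x + Δx) ⬝ᵥ θ) ^ 2} =
      {v | ∃ Δ : WithNormFun N, ‖Δ‖ ≤ δ ∧ v = (y - x ⬝ᵥ θ - f Δ) ^ 2} := by
    ext v
    refine exists_congr fun Δ => and_congr Iff.rfl ?_
    change _ = _ ↔ _ = (_ - θ ⬝ᵥ Δ) ^ 2
    rw [add_dotProduct, dotProduct_comm Δ θ, sub_add_eq_sub_sub]
  rw [hset, hD]
  exact f.isGreatest_sq_sub_apply hu hfu (y - x ⬝ᵥ θ) hδ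
end

section
/- Let ℓ : ℝ≥0 → ℝ be non-decreasing, convex, and lower-semicontinuous as a function of |z|, applied as L(z) = ℓ(|z - y|). Then max_{‖Δx‖ ≤ δ} ℓ(|(x + Δx)ᵀθ - y|) = ℓ(|y - xᵀθ| + δ‖θ‖_*). -/
open Matrix

section aux
variable {p : ℕ} (N : (Fin p → ℝ) → ℝ)
  (hN_eq : ∀ v, N v = 0 ↔ v = 0)
  (hN_smul : ∀ (a : ℝ) v, N (a • v) = |a| * N v)
  (hN_add : ∀ v w, N (v + w) ≤ N v + N w)

include hN_eq hN_smul hN_add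

lemma myN_zero : N 0 = 0 := (hN_eq 0).2 rfl

lemma myN_nonneg (v : Fin p → ℝ) : 0 ≤ N v := by
  have h1 : N (-v) = N v := by simpa using hN_smul (-1) v
  have h2 := hN_add v (-v)
  rw [add_neg_cancel, myN_zero N hN_eq hN_smul hN_add, h1] at h2
  linarith

lemma myN_sum_le {ι : Type*} (s : Finset ι) (f : ι → (Fin p → ℝ)) :
    N (∑ i ∈ s, f i) ≤ ∑ i ∈ s, N (f i) := by
  classical
  induction s using Finset.cons_induction with
  | empty => simp [myN_zero N hN_eq hN_smul hN_add]
  | cons a s ha ih =>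
    rw [Finset.sum_cons, Finset.sum_cons]
    exact le_trans (hN_add _ _) (by linarith)

lemma myN_bound : ∃ C : ℝ, 0 ≤ C ∧ ∀ v, N v ≤ C * ‖v‖ := by
  refine ⟨∑ i, N (Pi.single i 1), Finset.sum_nonneg fun i _ => myN_nonneg N hN_eq hN_smul hN_add _, fun v => ?_⟩
  set e : Fin p → (Fin p → ℝ) := fun i => Pi.single i (1:ℝ) with he
  have hv : v = ∑ i, (v i) • e i := by
    funext j
    simp [e, Finset.sum_apply, Pi.single_apply]
  calc N v = N (∑ i, (v i) • e i) := by rw [← hv]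
    _ ≤ ∑ i, N ((v i) • e i) := myN_sum_le N hN_eq hN_smul hN_add _ _
    _ = ∑ i, |v i| * N (e i) := by simp [hN_smul]
    _ ≤ ∑ i, ‖v‖ * N (e i) := by
        refine Finset.sum_le_sum fun i _ => ?_
        exact mul_le_mul_of_nonneg_right (by simpa using norm_le_pi_norm v i)
          (myN_nonneg N hN_eq hN_smul hN_add _)
    _ = (∑ i, N (Pi.single i 1)) * ‖v‖ := by
        rw [Finset.sum_mul]
        exact Finset.sum_congr rfl fun i _ => mul_comm _ _

lemma myN_cont : Continuous N := by
  obtain ⟨C, hC0, hC⟩ := myN_bound N hN_eq hN_smul hN_add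
  refine (LipschitzWith.of_dist_le_mul (K := ⟨C, hC0⟩) fun a b => ?_).continuous
  have h1 : N a ≤ N (a - b) + N b := by
    have := hN_add (a - b) b; simpa using this
  have h2 : N b ≤ N (a - b) + N a := by
    have := hN_add (b - a) a
    have hnb : N (b - a) = N (a - b) := by
      have := hN_smul (-1) (a - b); simpa [neg_sub] using this
    rw [hnb] at this; simpa using this
  have h3 : |N a - N b| ≤ N (a - b) := abs_sub_le_iff.2 ⟨by linarith, by linarith⟩
  calc dist (N a) (N b) = |N a - N b| := Real.dist_eq _ _
    _ ≤ N (a - b) := h3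
    _ ≤ C * ‖a - b‖ := hC _
    _ = (⟨C, hC0⟩ : NNReal) * dist a b := by rw [dist_eq_norm]

lemma myN_compact : IsCompact {v : Fin p → ℝ | N v ≤ 1} := by
  have hcl : IsClosed {v : Fin p → ℝ | N v ≤ 1} :=
    isClosed_le (myN_cont N hN_eq hN_smul hN_add) continuous_const
  rcases subsingleton_or_nontrivial (Fin p → ℝ) with hs | hs
  · have hsub : {v : Fin p → ℝ | N v ≤ 1} ⊆ {(0 : Fin p → ℝ)} := fun v _ => Subsingleton.elim v 0
    exact isCompact_singleton.of_isClosed_subset hcl hsub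
  · have hsph : (Metric.sphere (0 : Fin p → ℝ) 1).Nonempty :=
      NormedSpace.sphere_nonempty.2 zero_le_one
    obtain ⟨u, hu, humin⟩ := (isCompact_sphere (0 : Fin p → ℝ) 1).exists_isMinOn hsph
      ((myN_cont N hN_eq hN_smul hN_add).continuousOn)
    have huz : u ≠ 0 := by
      intro h
      rw [h] at hu
      simp at hu
    have hc0 : 0 < N u := by
      rcases lt_or_eq_of_le (myN_nonneg N hN_eq hN_smul hN_add u) with h | h
      · exact h
      · exact absurd ((hN_eq u).1 h.symm) huz
    have hlow : ∀ v : Fin p → ℝ, (N u) * ‖v‖ ≤ N v := by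
      intro v
      rcases eq_or_ne v 0 with rfl | hv
      · simp [myN_zero N hN_eq hN_smul hN_add]
      · have hnv : (0:ℝ) < ‖v‖ := norm_pos_iff.2 hv
        have hmem : ‖v‖⁻¹ • v ∈ Metric.sphere (0 : Fin p → ℝ) 1 := by
          simp [norm_smul, abs_of_pos (inv_pos.2 hnv), inv_mul_cancel₀ hnv.ne']
        have hle : N u ≤ N (‖v‖⁻¹ • v) := humin hmem
        have h2 : N (‖v‖⁻¹ • v) = ‖v‖⁻¹ * N v := by
          rw [hN_smul]; rw [abs_of_pos (inv_pos.2 hnv)]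
        rw [h2] at hle
        calc N u * ‖v‖ ≤ (‖v‖⁻¹ * N v) * ‖v‖ := by nlinarith
          _ = N v := by field_simp
    apply Metric.isCompact_of_isClosed_isBounded hcl
    rw [Metric.isBounded_iff_subset_closedBall 0]
    refine ⟨(N u)⁻¹, fun v hv => ?_⟩
    simp only [Metric.mem_closedBall, dist_zero_right]
    have := hlow v
    have hv1 : N v ≤ 1 := hv
    rw [← le_div_iff₀' hc0] at this
    calc ‖v‖ ≤ N v / N u := this
      _ ≤ 1 / N u := by gcongr

      _ = (N u)⁻¹ := one_div _


lemma myDual_spec (θ : Fin p → ℝ) :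
    0 ≤ dualNorm N θ ∧ (∀ v, |θ ⬝ᵥ v| ≤ dualNorm N θ * N v) ∧
      ∃ u, N u ≤ 1 ∧ θ ⬝ᵥ u = dualNorm N θ := by
  classical
  set D : Set ℝ := {v | ∃ x : Fin p → ℝ, N x ≤ 1 ∧ v = |θ ⬝ᵥ x|} with hD
  have hd : dualNorm N θ = sSup D := rfl
  have hcont : Continuous fun x : Fin p → ℝ => |θ ⬝ᵥ x| := by
    apply continuous_abs.comp
    show Continuous fun x : Fin p → ℝ => ∑ i, θ i * x i
    exact continuous_finset_sum _ fun i _ => (continuous_const.mul (continuous_apply i))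
  have himg : D = (fun x : Fin p → ℝ => |θ ⬝ᵥ x|) '' {v | N v ≤ 1} := by
    ext v
    constructor
    · rintro ⟨w, hw, rfl⟩; exact ⟨w, hw, rfl⟩
    · rintro ⟨w, hw, rfl⟩; exact ⟨w, hw, rfl⟩
  have hDc : IsCompact D := by
    rw [himg]; exact (myN_compact N hN_eq hN_smul hN_add).image hcont
  have hne : D.Nonempty := ⟨|θ ⬝ᵥ (0 : Fin p → ℝ)|, 0, le_of_eq (myN_zero N hN_eq hN_smul hN_add) |>.trans zero_le_one, rfl⟩
  have hbdd : BddAbove D := hDc.bddAbove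
  have h0mem : (0:ℝ) ∈ D := ⟨0, le_of_eq (myN_zero N hN_eq hN_smul hN_add) |>.trans zero_le_one, by simp⟩
  have hd0 : 0 ≤ dualNorm N θ := by rw [hd]; exact le_csSup hbdd h0mem
  refine ⟨hd0, ?_, ?_⟩
  · intro v
    rcases eq_or_ne v 0 with rfl | hv
    · simp [myN_zero N hN_eq hN_smul hN_add]
    · have hNv : 0 < N v := by
        rcases lt_or_eq_of_le (myN_nonneg N hN_eq hN_smul hN_add v) with h | h
        · exact h
        · exact absurd ((hN_eq v).1 h.symm) hv
      have hu1 : N ((N v)⁻¹ • v) ≤ 1 := by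
        rw [hN_smul, abs_of_pos (inv_pos.2 hNv), inv_mul_cancel₀ hNv.ne']
      have hmem : |θ ⬝ᵥ ((N v)⁻¹ • v)| ∈ D := ⟨_, hu1, rfl⟩
      have hle : |θ ⬝ᵥ ((N v)⁻¹ • v)| ≤ dualNorm N θ := by rw [hd]; exact le_csSup hbdd hmem
      have heq : |θ ⬝ᵥ ((N v)⁻¹ • v)| = (N v)⁻¹ * |θ ⬝ᵥ v| := by
        rw [dotProduct_smul, smul_eq_mul, abs_mul, abs_of_pos (inv_pos.2 hNv)]
      rw [heq] at hle
      calc |θ ⬝ᵥ v| = N v * ((N v)⁻¹ * |θ ⬝ᵥ v|) := by field_simp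
        _ ≤ N v * dualNorm N θ := by
            exact mul_le_mul_of_nonneg_left hle hNv.le
        _ = dualNorm N θ * N v := mul_comm _ _
  · have hsup : sSup D ∈ D := hDc.sSup_mem hne
    obtain ⟨u, hu1, hu2⟩ := hsup
    rcases le_or_gt 0 (θ ⬝ᵥ u) with h | h
    · exact ⟨u, hu1, by rw [hd, hu2, abs_of_nonneg h]⟩
    · refine ⟨-u, ?_, ?_⟩
      · have : N (-u) = N u := by simpa using hN_smul (-1) u
        rw [this]; exact hu1
      · rw [dotProduct_neg, hd, hu2, abs_of_neg h]

end aux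

theorem stmt3 {p : ℕ} (N : (Fin p → ℝ) → ℝ)
    (hN_eq : ∀ v, N v = 0 ↔ v = 0)
    (hN_smul : ∀ (a : ℝ) v, N (a • v) = |a| * N v)
    (hN_add : ∀ v w, N (v + w) ≤ N v + N w)
    (ℓ : ℝ → ℝ) (y : ℝ)
    (hℓ_mono : MonotoneOn ℓ (Set.Ici 0))
    (hL_conv : ConvexOn ℝ Set.univ fun z => ℓ |z - y|)
    (hL_lsc : LowerSemicontinuous fun z => ℓ |z - y|)
    (x θ : Fin p → ℝ) (δ : ℝ) (hδ : 0 ≤ δ) :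
    IsGreatest {v | ∃ Δx : Fin p → ℝ, N Δx ≤ δ ∧ v = ℓ |(x + Δx) ⬝ᵥ θ - y|}
      (ℓ (|y - x ⬝ᵥ θ| + δ * dualNorm N θ)) := by
  obtain ⟨hd0, hbound, u, hu1, hud⟩ := myDual_spec N hN_eq hN_smul hN_add θ
  set d := dualNorm N θ with hd
  have huN0 : 0 ≤ N u := myN_nonneg N hN_eq hN_smul hN_add u
  have hδd : 0 ≤ δ * d := mul_nonneg hδ hd0
  constructor
  · -- membership
    set ε : ℝ := if 0 ≤ x ⬝ᵥ θ - y then 1 else -1 with hε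
    have hεabs : |ε| = 1 := by
      rw [hε]; split_ifs <;> simp
    refine ⟨(ε * δ) • u, ?_, ?_⟩
    · rw [hN_smul, abs_mul, hεabs, one_mul, abs_of_nonneg hδ]
      calc δ * N u ≤ δ * 1 := mul_le_mul_of_nonneg_left hu1 hδ
        _ = δ := mul_one δ
    · have hdp : (x + (ε * δ) • u) ⬝ᵥ θ - y = (x ⬝ᵥ θ - y) + ε * (δ * d) := by
        rw [add_dotProduct, smul_dotProduct, dotProduct_comm u θ, hud, smul_eq_mul]
        ring
      rw [hdp, abs_sub_comm y (x ⬝ᵥ θ)]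
      congr 1
      rw [hε]
      split_ifs with h
      · rw [one_mul, abs_of_nonneg h]
        exact (abs_of_nonneg (by linarith)).symm
      · push_neg at h
        rw [abs_of_neg h]
        have hneg : x ⬝ᵥ θ - y + -1 * (δ * d) < 0 := by linarith
        rw [abs_of_neg hneg]; ring
  · -- upper bound
    rintro v ⟨Δx, hΔ, rfl⟩
    have h1 : |(x + Δx) ⬝ᵥ θ - y| ≤ |x ⬝ᵥ θ - y| + δ * d := by
      have h2 : (x + Δx) ⬝ᵥ θ - y = (x ⬝ᵥ θ - y) + Δx ⬝ᵥ θ := by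
        rw [add_dotProduct]; ring
      rw [h2]
      refine (abs_add_le _ _).trans ?_
      have h3 : |Δx ⬝ᵥ θ| ≤ d * N Δx := by
        rw [dotProduct_comm]; exact hbound Δx
      have h4 : d * N Δx ≤ d * δ := mul_le_mul_of_nonneg_left hΔ hd0
      linarith [mul_comm d δ ▸ h4.trans_eq (mul_comm d δ)]
    rw [abs_sub_comm y (x ⬝ᵥ θ)]
    exact hℓ_mono (Set.mem_Ici.2 (abs_nonneg _))
      (Set.mem_Ici.2 (by positivity)) h1
end

section
/- Let ℓ : ℝ → ℝ be non-increasing, convex, and lower-semicontinuous, y ∈ {-1, 1}, x, θ ∈ ℝ^p, δ ≥ 0. Then max_{‖Δx‖ ≤ δ} ℓ(y·((x + Δx)ᵀθ)) = ℓ(y·(xᵀθ) - δ‖θ‖_*). -/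
open Matrix

namespace Seminorm

variable {E : Type*} [NormedAddCommGroup E] [NormedSpace ℝ E] [FiniteDimensional ℝ E]

theorem continuous_of_finiteDimensional (q : Seminorm ℝ E) : Continuous q :=
  continuousOn_univ.1 (q.convexOn.continuousOn isOpen_univ)

theorem exists_pos_mul_norm_le (q : Seminorm ℝ E) (hq : ∀ x, q x = 0 → x = 0) :
    ∃ c > 0, ∀ x, c * ‖x‖ ≤ q x := by
  rcases subsingleton_or_nontrivial E with hE | hE
  · exact ⟨1, one_pos, fun x => by simp [Subsingleton.elim x 0]⟩
  obtain ⟨u, hu, hmin⟩ := (isCompact_sphere (0 : E) 1).exists_isMinOn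
    (NormedSpace.sphere_nonempty.2 zero_le_one) q.continuous_of_finiteDimensional.continuousOn
  have hu0 : u ≠ 0 := ne_zero_of_mem_unit_sphere ⟨u, hu⟩
  refine ⟨q u, (apply_nonneg q u).lt_of_ne fun h => hu0 (hq u h.symm), fun x => ?_⟩
  rcases eq_or_ne x 0 with rfl | hx
  · simp
  have hxu : q u ≤ q (‖x‖⁻¹ • x) := hmin (by simp [norm_smul, hx])
  calc q u * ‖x‖ ≤ q (‖x‖⁻¹ • x) * ‖x‖ := by gcongr
    _ = q x := by
      rw [map_smul_eq_mul, norm_inv, norm_norm]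
      field_simp [norm_ne_zero_iff.2 hx]

theorem isCompact_closedBall_zero (q : Seminorm ℝ E) (hq : ∀ x, q x = 0 → x = 0) (r : ℝ) :
    IsCompact (q.closedBall 0 r) := by
  obtain ⟨c, hc, hcq⟩ := q.exists_pos_mul_norm_le hq
  refine (isCompact_closedBall (0 : E) (r / c)).of_isClosed_subset ?_ fun x hx => ?_
  · simpa only [closedBall_zero_eq] using
      isClosed_le q.continuous_of_finiteDimensional continuous_const
  · rw [mem_closedBall_zero] at hx
    rw [Metric.mem_closedBall, dist_zero_right, le_div_iff₀ hc, mul_comm]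
    exact (hcq x).trans hx

end Seminorm

section DualNorm

variable {p : ℕ} (q : Seminorm ℝ (Fin p → ℝ))

theorem isGreatest_dualNorm (hq : ∀ x, q x = 0 → x = 0) (θ : Fin p → ℝ) :
    IsGreatest {v | ∃ x, q x ≤ 1 ∧ v = |θ ⬝ᵥ x|} (dualNorm q θ) := by
  have hcont : Continuous fun x : Fin p → ℝ => |θ ⬝ᵥ x| :=
    continuous_abs.comp (LinearMap.continuous_of_finiteDimensional (dotProductBilin ℝ ℝ θ))
  obtain ⟨z, hz, hmax⟩ := (q.isCompact_closedBall_zero hq 1).exists_isMaxOn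
    ⟨0, by simp⟩ hcont.continuousOn
  have hgreatest : IsGreatest {v | ∃ x, q x ≤ 1 ∧ v = |θ ⬝ᵥ x|} |θ ⬝ᵥ z| := by
    refine ⟨⟨z, by simpa [Seminorm.mem_closedBall_zero] using hz, rfl⟩, ?_⟩
    rintro v ⟨x, hx, rfl⟩
    exact hmax (q.mem_closedBall_zero.2 hx)
  rwa [dualNorm, hgreatest.csSup_eq]

theorem abs_dotProduct_le_dualNorm_mul (hq : ∀ x, q x = 0 → x = 0) (θ x : Fin p → ℝ) :
    |θ ⬝ᵥ x| ≤ dualNorm q θ * q x := by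
  rcases eq_or_ne x 0 with rfl | hx
  · simp
  have hqx : 0 < q x := (apply_nonneg q x).lt_of_ne fun h => hx (hq x h.symm)
  have hunit : q ((q x)⁻¹ • x) ≤ 1 := by
    rw [map_smul_eq_mul, norm_inv, Real.norm_of_nonneg hqx.le, inv_mul_cancel₀ hqx.ne']
  have hle := (isGreatest_dualNorm q hq θ).2 ⟨_, hunit, rfl⟩
  rw [dotProduct_smul, smul_eq_mul, abs_mul, abs_inv, abs_of_pos hqx, inv_mul_le_iff₀ hqx] at hle
  linarith

theorem exists_dotProduct_eq_dualNorm (hq : ∀ x, q x = 0 → x = 0) (θ : Fin p → ℝ) :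
    ∃ z, q z ≤ 1 ∧ z ⬝ᵥ θ = dualNorm q θ := by
  obtain ⟨⟨z, hz, hzθ⟩, -⟩ := isGreatest_dualNorm q hq θ
  rcases abs_choice (θ ⬝ᵥ z) with h | h
  · exact ⟨z, hz, by rw [hzθ, h, dotProduct_comm]⟩
  · exact ⟨-z, by rwa [map_neg_eq_map], by rw [hzθ, h, neg_dotProduct, dotProduct_comm]⟩

theorem isLeast_mul_add_dotProduct (hq : ∀ x, q x = 0 → x = 0) (y : ℝ) (x θ : Fin p → ℝ)
    {δ : ℝ} (hδ : 0 ≤ δ) :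
    IsLeast {u | ∃ Δx, q Δx ≤ δ ∧ u = y * ((x + Δx) ⬝ᵥ θ)}
      (y * (x ⬝ᵥ θ) - |y| * δ * dualNorm q θ) := by
  obtain ⟨z, hz, hzθ⟩ := exists_dotProduct_eq_dualNorm q hq θ
  have hD : 0 ≤ dualNorm q θ := (isGreatest_dualNorm q hq θ).2 ⟨0, by simp, by simp⟩
  constructor
  · refine ⟨-(SignType.sign y * δ) • z, ?_, ?_⟩
    · rw [map_smul_eq_mul, norm_neg, norm_mul, Real.norm_of_nonneg hδ]
      calc ‖(SignType.sign y : ℝ)‖ * δ * q z ≤ 1 * δ * 1 := by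
            gcongr
            rcases lt_trichotomy y 0 with h | h | h <;> simp [h]
        _ = δ := by ring
    · rw [add_dotProduct, smul_dotProduct, hzθ, smul_eq_mul, ← self_mul_sign y]
      ring
  · rintro _ ⟨Δx, hΔx, rfl⟩
    have hshift : |y| * |θ ⬝ᵥ Δx| ≤ |y| * δ * dualNorm q θ := calc
      |y| * |θ ⬝ᵥ Δx| ≤ |y| * (dualNorm q θ * q Δx) := by
        gcongr; exact abs_dotProduct_le_dualNorm_mul q hq θ Δx
      _ ≤ |y| * (dualNorm q θ * δ) := by gcongr
      _ = |y| * δ * dualNorm q θ := by ring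
    have := neg_abs_le (y * (θ ⬝ᵥ Δx))
    rw [abs_mul] at this
    rw [add_dotProduct, mul_add, dotProduct_comm Δx]
    linarith

end DualNorm

theorem stmt4_general {p : ℕ} (N : (Fin p → ℝ) → ℝ)
    (hN_eq : ∀ v, N v = 0 ↔ v = 0)
    (hN_smul : ∀ (a : ℝ) v, N (a • v) = |a| * N v)
    (hN_add : ∀ v w, N (v + w) ≤ N v + N w)
    (ℓ : ℝ → ℝ) (hℓ_anti : Antitone ℓ)
    (y : ℝ) (hy : y = -1 ∨ y = 1)
    (x θ : Fin p → ℝ) (δ : ℝ) (hδ : 0 ≤ δ) :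
    IsGreatest {v | ∃ Δx : Fin p → ℝ, N Δx ≤ δ ∧ v = ℓ (y * ((x + Δx) ⬝ᵥ θ))}
      (ℓ (y * (x ⬝ᵥ θ) - δ * dualNorm N θ)) := by
  let q : Seminorm ℝ (Fin p → ℝ) := .of N hN_add fun a v => by rw [hN_smul, Real.norm_eq_abs]
  have hworst := isLeast_mul_add_dotProduct q (fun v => (hN_eq v).1) y x θ hδ
  have hy_abs : |y| = 1 := by rcases hy with rfl | rfl <;> simp
  rw [hy_abs, one_mul] at hworst
  refine ⟨?_, ?_⟩
  · obtain ⟨Δx, hΔx, hworst_eq⟩ := hworst.1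
    exact ⟨Δx, hΔx, congrArg ℓ hworst_eq⟩
  · rintro _ ⟨Δx, hΔx, rfl⟩
    exact hℓ_anti (hworst.2 ⟨Δx, hΔx, rfl⟩)

theorem stmt4 {p : ℕ} (N : (Fin p → ℝ) → ℝ)
    (hN_eq : ∀ v, N v = 0 ↔ v = 0)
    (hN_smul : ∀ (a : ℝ) v, N (a • v) = |a| * N v)
    (hN_add : ∀ v w, N (v + w) ≤ N v + N w)
    (ℓ : ℝ → ℝ) (hℓ_anti : Antitone ℓ) (hℓ_conv : ConvexOn ℝ Set.univ ℓ)
    (hℓ_lsc : LowerSemicontinuous ℓ)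
    (y : ℝ) (hy : y = -1 ∨ y = 1)
    (x θ : Fin p → ℝ) (δ : ℝ) (hδ : 0 ≤ δ) :
    IsGreatest {v | ∃ Δx : Fin p → ℝ, N Δx ≤ δ ∧ v = ℓ (y * ((x + Δx) ⬝ᵥ θ))}
      (ℓ (y * (x ⬝ᵥ θ) - δ * dualNorm N θ)) :=
  stmt4_general N hN_eq hN_smul hN_add ℓ hℓ_anti y hy x θ δ hδ
end

section
/- The zero vector minimizes the adversarial training risk R^adv(θ) = (1/n)∑ᵢ(|yᵢ - xᵢᵀθ| + δ‖θ‖_*)² if and only if δ ≥ ‖Xᵀy‖ / ‖y‖₁. -/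
open Matrix

/-- The adversarial training risk `(1/n) ∑ᵢ (|yᵢ - xᵢᵀθ| + δ‖θ‖_*)²`. -/
noncomputable def advRisk {n p : ℕ} (N : (Fin p → ℝ) → ℝ)
    (X : Matrix (Fin n) (Fin p) ℝ) (y : Fin n → ℝ) (δ : ℝ) (θ : Fin p → ℝ) : ℝ :=
  (1 / n : ℝ) * ∑ i, (|y i - X i ⬝ᵥ θ| + δ * dualNorm N θ) ^ 2

/-!
Write `u = Xᵀy` and `D = ‖θ‖_*`. Termwise, `(|b - c| + e)²` lies between `b² - 2bc + 2|b|e` and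
that plus `(|c| + e)²`; hence `n · R^adv(θ) = ‖y‖₂² - 2 uᵀθ + 2δD‖y‖₁ + E(θ)` with
`0 ≤ E(θ) ≤ ∑ᵢ (|xᵢᵀθ| + δD)²`, an error of second order in `θ`. If `‖u‖ ≤ δ‖y‖₁`, then
`uᵀθ ≤ ‖u‖ D` makes the first-order part nonnegative. Otherwise Hahn–Banach gives `θ₀` with
`‖θ₀‖_* ≤ 1` and `uᵀθ₀ = ‖u‖`, and along `tθ₀` the first-order part is at most
`-2t (‖u‖ - δ‖y‖₁) < 0`, which beats the `O(t²)` error for small `t`.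
-/

theorem Seminorm.exists_pos_mul_norm_le_s5 {E : Type*} [NormedAddCommGroup E] [NormedSpace ℝ E]
    [FiniteDimensional ℝ E] (q : Seminorm ℝ E) (hq : ∀ x, q x = 0 → x = 0) :
    ∃ c > 0, ∀ x, c * ‖x‖ ≤ q x := by
  rcases subsingleton_or_nontrivial E with hE | hE
  · exact ⟨1, one_pos, fun x => by simp [Subsingleton.elim x 0]⟩
  obtain ⟨x₀, hx₀, hmin⟩ := (isCompact_sphere (0 : E) 1).exists_isMinOn
    (NormedSpace.sphere_nonempty.2 zero_le_one) q.convexOn.locallyLipschitz.continuous.continuousOn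
  have hx₀ : ‖x₀‖ = 1 := by simpa using hx₀
  refine ⟨q x₀, (apply_nonneg q x₀).lt_of_ne' fun h => by simp [hq x₀ h] at hx₀, fun x => ?_⟩
  rcases eq_or_ne x 0 with rfl | hx
  · simp
  have hxpos : 0 < ‖x‖ := norm_pos_iff.2 hx
  have hmem : ‖x‖⁻¹ • x ∈ Metric.sphere (0 : E) 1 := by
    simp [norm_smul, hxpos.ne']
  calc q x₀ * ‖x‖ ≤ q (‖x‖⁻¹ • x) * ‖x‖ := by gcongr; exact hmin hmem
    _ = q x := by rw [map_smul_eq_mul, Real.norm_of_nonneg (inv_nonneg.2 hxpos.le)]; field_simp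

theorem Seminorm.exists_abs_dotProduct_le_eq {ι : Type*} [Fintype ι] [DecidableEq ι]
    (q : Seminorm ℝ (ι → ℝ)) (u : ι → ℝ) :
    ∃ θ : ι → ℝ, (∀ x, |θ ⬝ᵥ x| ≤ q x) ∧ θ ⬝ᵥ u = q u := by
  have hker (c : ℝ) (hc : c • u = 0) : c • q u = 0 := by
    obtain rfl | rfl := smul_eq_zero.1 hc <;> simp
  let f := LinearPMap.mkSpanSingleton' (σ := RingHom.id ℝ) u (q u) hker
  obtain ⟨g, hgf, hgq⟩ := Module.Dual.exists_extension_of_le_seminorm_real f.domain f.toFun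
    (p := q) fun ⟨x, hx⟩ => by
      obtain ⟨c, rfl⟩ := Submodule.mem_span_singleton.1 hx
      change f ⟨c • u, hx⟩ ≤ q (c • u)
      rw [LinearPMap.mkSpanSingleton'_apply, map_smul_eq_mul]
      exact mul_le_mul_of_nonneg_right (le_abs_self c) (apply_nonneg q u)
  have hθ : ∀ x, (dotProductEquiv ℝ ι).symm g ⬝ᵥ x = g x :=
    LinearMap.congr_fun ((dotProductEquiv ℝ ι).apply_symm_apply g)
  refine ⟨(dotProductEquiv ℝ ι).symm g, fun x => hθ x ▸ hgq x, ?_⟩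
  rw [hθ, hgf ⟨u, Submodule.mem_span_singleton_self u⟩]
  exact LinearPMap.mkSpanSingleton'_apply_self _ _ _ _

section DualNorm

variable {p : ℕ}

theorem dualNorm_nonneg (N : (Fin p → ℝ) → ℝ) (θ : Fin p → ℝ) : 0 ≤ dualNorm N θ :=
  Real.sSup_nonneg <| by rintro v ⟨x, -, rfl⟩; exact abs_nonneg _

theorem dualNorm_zero (N : (Fin p → ℝ) → ℝ) : dualNorm N 0 = 0 :=
  (Real.sSup_nonpos <| by rintro v ⟨x, -, rfl⟩; simp).antisymm (dualNorm_nonneg N 0)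

theorem dualNorm_le {N : (Fin p → ℝ) → ℝ} {θ : Fin p → ℝ} {c : ℝ} (hc : 0 ≤ c)
    (h : ∀ x, |θ ⬝ᵥ x| ≤ c * N x) : dualNorm N θ ≤ c :=
  Real.sSup_le (by rintro v ⟨x, hx, rfl⟩; exact (h x).trans (mul_le_of_le_one_right hc hx)) hc

theorem Seminorm.bddAbove_abs_dotProduct (q : Seminorm ℝ (Fin p → ℝ))
    (hq : ∀ x, q x = 0 → x = 0) (θ : Fin p → ℝ) :
    BddAbove {v | ∃ x : Fin p → ℝ, q x ≤ 1 ∧ v = |θ ⬝ᵥ x|} := by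
  obtain ⟨c, hc, hcq⟩ := q.exists_pos_mul_norm_le_s5 hq
  have hcont : Continuous fun x : Fin p → ℝ => |θ ⬝ᵥ x| := by fun_prop
  obtain ⟨M, hM⟩ := (isCompact_closedBall (0 : Fin p → ℝ) c⁻¹).bddAbove_image hcont.continuousOn
  refine ⟨M, ?_⟩
  rintro v ⟨x, hx, rfl⟩
  refine hM ⟨x, ?_, rfl⟩
  rw [mem_closedBall_zero_iff, ← one_div, le_div_iff₀' hc]
  exact (hcq x).trans hx

theorem Seminorm.abs_dotProduct_le_dualNorm (q : Seminorm ℝ (Fin p → ℝ))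
    (hq : ∀ x, q x = 0 → x = 0) {θ x : Fin p → ℝ} (hx : q x ≤ 1) : |θ ⬝ᵥ x| ≤ dualNorm q θ :=
  le_csSup (q.bddAbove_abs_dotProduct hq θ) ⟨x, hx, rfl⟩

theorem Seminorm.dotProduct_le_mul_dualNorm (q : Seminorm ℝ (Fin p → ℝ))
    (hq : ∀ x, q x = 0 → x = 0) (u θ : Fin p → ℝ) : u ⬝ᵥ θ ≤ q u * dualNorm q θ := by
  rcases (apply_nonneg q u).eq_or_lt with hu | hu
  · simp [hq u hu.symm]
  have hunit : q ((q u)⁻¹ • u) ≤ 1 := by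
    rw [map_smul_eq_mul, Real.norm_of_nonneg (inv_nonneg.2 hu.le), inv_mul_cancel₀ hu.ne']
  calc u ⬝ᵥ θ = q u * (θ ⬝ᵥ ((q u)⁻¹ • u)) := by
        rw [dotProduct_smul, smul_eq_mul, dotProduct_comm, mul_inv_cancel_left₀ hu.ne']
    _ ≤ q u * dualNorm q θ := by
        gcongr
        exact (le_abs_self _).trans (q.abs_dotProduct_le_dualNorm hq hunit)

end DualNorm

section SquareLoss

variable {ι κ : Type*} [Fintype ι] [Fintype κ]

theorem sq_sub_two_mul_add_two_abs_mul_le (b c e : ℝ) :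
    b ^ 2 - 2 * (b * c) + 2 * (|b| * e) ≤ (|b - c| + e) ^ 2 := by
  have hbc : b * (b - c) ≤ |b| * |b - c| := abs_mul b (b - c) ▸ le_abs_self _
  nlinarith [sq_nonneg (|b - c| + e - |b|), sq_abs b]

theorem sq_abs_sub_add_le {b c e : ℝ} (he : 0 ≤ e) :
    (|b - c| + e) ^ 2 ≤ b ^ 2 - 2 * (b * c) + 2 * (|b| * e) + (|c| + e) ^ 2 := by
  have := mul_le_mul_of_nonneg_right (abs_sub b c) he
  nlinarith [sq_abs (b - c), sq_abs c]

theorem sum_mul_dotProduct (X : Matrix ι κ ℝ) (y : ι → ℝ) (θ : κ → ℝ) :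
    ∑ i, y i * (X i ⬝ᵥ θ) = (Xᵀ *ᵥ y) ⬝ᵥ θ := by
  rw [mulVec_transpose, ← dotProduct_mulVec]
  rfl

theorem sum_sq_sub_le_sum_sq_abs_sub_add (X : Matrix ι κ ℝ) (y : ι → ℝ) (θ : κ → ℝ) (e : ℝ) :
    ∑ i, y i ^ 2 - 2 * ((Xᵀ *ᵥ y) ⬝ᵥ θ) + 2 * (e * ∑ i, |y i|) ≤
      ∑ i, (|y i - X i ⬝ᵥ θ| + e) ^ 2 := by
  calc _ = ∑ i, (y i ^ 2 - 2 * (y i * (X i ⬝ᵥ θ)) + 2 * (|y i| * e)) := by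
        simp only [Finset.sum_add_distrib, Finset.sum_sub_distrib, ← Finset.mul_sum,
          ← Finset.sum_mul, sum_mul_dotProduct, mul_comm e]
    _ ≤ _ := Finset.sum_le_sum fun i _ => sq_sub_two_mul_add_two_abs_mul_le _ _ e

theorem sum_sq_abs_sub_add_le (X : Matrix ι κ ℝ) (y : ι → ℝ) (θ : κ → ℝ) {e : ℝ} (he : 0 ≤ e) :
    ∑ i, (|y i - X i ⬝ᵥ θ| + e) ^ 2 ≤
      ∑ i, y i ^ 2 - 2 * ((Xᵀ *ᵥ y) ⬝ᵥ θ) + 2 * (e * ∑ i, |y i|) +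
        ∑ i, (|X i ⬝ᵥ θ| + e) ^ 2 := by
  calc _ ≤ ∑ i, (y i ^ 2 - 2 * (y i * (X i ⬝ᵥ θ)) + 2 * (|y i| * e) + (|X i ⬝ᵥ θ| + e) ^ 2) :=
        Finset.sum_le_sum fun i _ => sq_abs_sub_add_le he
    _ = _ := by
        simp only [Finset.sum_add_distrib, Finset.sum_sub_distrib, ← Finset.mul_sum,
          ← Finset.sum_mul, sum_mul_dotProduct, mul_comm e]

end SquareLoss

section AdvRisk

variable {n p : ℕ}

theorem advRisk_zero (N : (Fin p → ℝ) → ℝ) (X : Matrix (Fin n) (Fin p) ℝ) (y : Fin n → ℝ)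
    (δ : ℝ) : advRisk N X y δ 0 = 1 / n * ∑ i, y i ^ 2 := by
  simp [advRisk, dualNorm_zero]

theorem Seminorm.advRisk_zero_le (q : Seminorm ℝ (Fin p → ℝ)) (hq : ∀ x, q x = 0 → x = 0)
    (X : Matrix (Fin n) (Fin p) ℝ) (y : Fin n → ℝ) {δ : ℝ}
    (h : q (Xᵀ *ᵥ y) ≤ δ * ∑ i, |y i|) (θ : Fin p → ℝ) :
    advRisk q X y δ 0 ≤ advRisk q X y δ θ := by
  rw [advRisk_zero, advRisk]
  refine mul_le_mul_of_nonneg_left ?_ (by positivity)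
  have hD := dualNorm_nonneg q θ
  have hpair := q.dotProduct_le_mul_dualNorm hq (Xᵀ *ᵥ y) θ
  calc ∑ i, y i ^ 2
      ≤ ∑ i, y i ^ 2 - 2 * ((Xᵀ *ᵥ y) ⬝ᵥ θ) + 2 * (δ * dualNorm q θ * ∑ i, |y i|) := by
        linarith [mul_le_mul_of_nonneg_right h hD]
    _ ≤ _ := sum_sq_sub_le_sum_sq_abs_sub_add X y θ _

theorem Seminorm.exists_advRisk_lt_advRisk_zero (q : Seminorm ℝ (Fin p → ℝ))
    (X : Matrix (Fin n) (Fin p) ℝ) (y : Fin n → ℝ) {δ : ℝ} (hδ : 0 ≤ δ)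
    (h : δ * ∑ i, |y i| < q (Xᵀ *ᵥ y)) : ∃ θ, advRisk q X y δ θ < advRisk q X y δ 0 := by
  have hn : 0 < n := Nat.pos_of_ne_zero (by rintro rfl; simp at h)
  obtain ⟨θ₀, hθ₀, hθ₀u⟩ := q.exists_abs_dotProduct_le_eq (Xᵀ *ᵥ y)
  set ε := q (Xᵀ *ᵥ y) - δ * ∑ i, |y i|
  set K := ∑ i, (|X i ⬝ᵥ θ₀| + δ) ^ 2
  set t := ε / (K + 1)
  have hK : 0 ≤ K := by positivity
  have hε : 0 < ε := sub_pos.2 h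
  have ht : 0 < t := by positivity
  have htK : t * (K + 1) = ε := div_mul_cancel₀ ε (by positivity)
  have hD0 := dualNorm_nonneg q (t • θ₀)
  have hD : dualNorm q (t • θ₀) ≤ t := dualNorm_le ht.le fun x => by
    rw [smul_dotProduct, smul_eq_mul, abs_mul, abs_of_pos ht]
    exact mul_le_mul_of_nonneg_left (hθ₀ x) ht.le
  refine ⟨t • θ₀, ?_⟩
  rw [advRisk, advRisk_zero]
  refine mul_lt_mul_of_pos_left ?_ (by positivity)
  calc _ ≤ ∑ i, y i ^ 2 - 2 * ((Xᵀ *ᵥ y) ⬝ᵥ (t • θ₀)) +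
          2 * (δ * dualNorm q (t • θ₀) * ∑ i, |y i|) +
          ∑ i, (|X i ⬝ᵥ (t • θ₀)| + δ * dualNorm q (t • θ₀)) ^ 2 :=
        sum_sq_abs_sub_add_le X y _ (mul_nonneg hδ hD0)
    _ ≤ ∑ i, y i ^ 2 - 2 * (t * q (Xᵀ *ᵥ y)) + 2 * (δ * t * ∑ i, |y i|) +
          ∑ i, (t * |X i ⬝ᵥ θ₀| + δ * t) ^ 2 := by
        simp only [dotProduct_smul, smul_eq_mul, dotProduct_comm _ θ₀, hθ₀u, abs_mul,
          abs_of_pos ht]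
        gcongr
    _ = ∑ i, y i ^ 2 - 2 * t * ε + t ^ 2 * K := by
        have hterm (a : ℝ) : (t * a + δ * t) ^ 2 = t ^ 2 * (a + δ) ^ 2 := by ring
        simp only [hterm, ← Finset.mul_sum]
        ring
    _ < ∑ i, y i ^ 2 := by nlinarith

end AdvRisk

theorem stmt5 {n p : ℕ} (N : (Fin p → ℝ) → ℝ)
    (hN_eq : ∀ v, N v = 0 ↔ v = 0)
    (hN_smul : ∀ (a : ℝ) v, N (a • v) = |a| * N v)
    (hN_add : ∀ v w, N (v + w) ≤ N v + N w)
    (X : Matrix (Fin n) (Fin p) ℝ) (y : Fin n → ℝ) (hy : y ≠ 0)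
    (δ : ℝ) (hδ : 0 < δ) :
    (∀ θ : Fin p → ℝ, advRisk N X y δ 0 ≤ advRisk N X y δ θ) ↔
      N (Xᵀ *ᵥ y) / (∑ i, |y i|) ≤ δ := by
  let q : Seminorm ℝ (Fin p → ℝ) := Seminorm.of N hN_add hN_smul
  obtain ⟨i, hi⟩ := Function.ne_iff.1 hy
  have hy₁ : 0 < ∑ i, |y i| :=
    Finset.sum_pos' (fun i _ => abs_nonneg _) ⟨i, Finset.mem_univ i, abs_pos.2 hi⟩
  rw [div_le_iff₀ hy₁]
  constructor
  · intro hmin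
    by_contra! hlt
    obtain ⟨θ, hθ⟩ := q.exists_advRisk_lt_advRisk_zero X y hδ.le hlt
    exact (hmin θ).not_gt hθ
  · exact q.advRisk_zero_le (fun x => (hN_eq x).1) X y
end

section
/- Let θ̂ be the minimum ℓ₁-norm interpolator of (X, y) with X full row rank, and let δ̄ = 1/(n‖α̂‖_∞) with α̂ the dual optimum. Then for any test distribution, √(R^adv_*(θ̂; δ_test, ‖·‖_∞)) - √(R_*(θ̂)) ≤ √p · (δ_test/δ̄) · √(R^adv(θ̂; δ̄, ‖·‖_2)), where R^adv(θ̂; δ̄, ‖·‖_2) is the empirical ℓ₂-adversarial risk. -/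
/-!
A perturbation with `‖Δx‖_∞ ≤ δ` moves the residual `y₀ - x₀ᵀθ` by at most `δ‖θ‖₁`, and a sign
vector attains this, so the pointwise adversarial loss is `(|y₀ - x₀ᵀθ| + δ‖θ‖₁)²`. By
Cauchy–Schwarz (`E|r| ≤ √(E r²)`) its `L²(μ)` norm exceeds that of the residual by at most
`δ_test‖θ̂‖₁`. Since `θ̂` interpolates, the empirical `ℓ₂`-adversarial risk is exactly
`δ̄²‖θ̂‖₂²`, and `‖θ̂‖₁ ≤ √p‖θ̂‖₂` closes the gap. In the degenerate case `δ̄ = 0` (Lean's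
`1 / 0 = 0`) the dual optimum is `α̂ = 0`; rescaling `y` into the dual feasible set then gives
`y = 0`, so `θ̂ = 0`.
-/

open Matrix MeasureTheory

/-- The ℓ₁-norm of a vector in `ℝ^m`. -/
noncomputable def l1norm {m : ℕ} (v : Fin m → ℝ) : ℝ := ∑ i, |v i|

/-- The ℓ₂-norm of a vector in `ℝ^m`. -/
noncomputable def l2norm {m : ℕ} (v : Fin m → ℝ) : ℝ := Real.sqrt (∑ i, v i ^ 2)

/-- The ℓ₂-adversarial training risk `(1/n) ∑ᵢ (|yᵢ - xᵢᵀθ| + δ‖θ‖₂)²`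
(the ℓ₂-norm is its own dual). -/
noncomputable def advRiskL2 {n p : ℕ} (X : Matrix (Fin n) (Fin p) ℝ) (y : Fin n → ℝ)
    (δ : ℝ) (θ : Fin p → ℝ) : ℝ :=
  (1 / n : ℝ) * ∑ i, (|y i - X i ⬝ᵥ θ| + δ * l2norm θ) ^ 2

lemma l1norm_nonneg {m : ℕ} (v : Fin m → ℝ) : 0 ≤ l1norm v :=
  Finset.sum_nonneg fun _ _ => abs_nonneg _

lemma l2norm_nonneg {m : ℕ} (v : Fin m → ℝ) : 0 ≤ l2norm v := Real.sqrt_nonneg _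

@[simp] lemma l1norm_zero {m : ℕ} : l1norm (0 : Fin m → ℝ) = 0 := by simp [l1norm]

lemma l1norm_le_sqrt_mul_l2norm {m : ℕ} (v : Fin m → ℝ) :
    l1norm v ≤ Real.sqrt m * l2norm v := by
  rw [l2norm, ← Real.sqrt_mul (by positivity), Real.le_sqrt (l1norm_nonneg v) (by positivity)]
  simpa [l1norm, sq_abs] using sq_sum_le_card_mul_sum_sq (s := Finset.univ) (f := fun i => |v i|)

lemma abs_dotProduct_le_norm_mul_l1norm {m : ℕ} (Δ θ : Fin m → ℝ) :
    |Δ ⬝ᵥ θ| ≤ ‖Δ‖ * l1norm θ := by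
  rw [dotProduct, l1norm, Finset.mul_sum]
  refine (Finset.abs_sum_le_sum_abs _ _).trans (Finset.sum_le_sum fun i _ => ?_)
  rw [abs_mul]
  exact mul_le_mul_of_nonneg_right (norm_le_pi_norm Δ i) (abs_nonneg _)

lemma sign_dotProduct_eq_l1norm {m : ℕ} (θ : Fin m → ℝ) :
    (fun i => (SignType.sign (θ i) : ℝ)) ⬝ᵥ θ = l1norm θ := by
  simp [dotProduct, l1norm]

lemma norm_sign_le_one {m : ℕ} (θ : Fin m → ℝ) : ‖fun i => (SignType.sign (θ i) : ℝ)‖ ≤ 1 :=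
  (pi_norm_le_iff_of_nonneg zero_le_one).2 fun i => by
    rcases lt_trichotomy (θ i) 0 with h | h | h <;> simp [h]

lemma exists_abs_sub_dotProduct_eq {m : ℕ} (θ : Fin m → ℝ) {δ : ℝ} (hδ : 0 ≤ δ) (g : ℝ) :
    ∃ Δ : Fin m → ℝ, ‖Δ‖ ≤ δ ∧ |g - Δ ⬝ᵥ θ| = |g| + δ * l1norm θ := by
  set s : Fin m → ℝ := fun i => SignType.sign (θ i)
  have hnorm (c : ℝ) (hc : |c| = δ) : ‖c • s‖ ≤ δ := by
    rw [norm_smul, Real.norm_eq_abs, hc]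
    exact mul_le_of_le_one_right hδ (norm_sign_le_one θ)
  have hl1 := l1norm_nonneg θ
  rcases le_total 0 g with hg | hg
  · refine ⟨(-δ) • s, hnorm _ (by simp [abs_of_nonneg hδ]), ?_⟩
    rw [smul_dotProduct, sign_dotProduct_eq_l1norm, smul_eq_mul, abs_of_nonneg hg,
      abs_of_nonneg (by nlinarith)]
    ring
  · refine ⟨δ • s, hnorm _ (abs_of_nonneg hδ), ?_⟩
    rw [smul_dotProduct, sign_dotProduct_eq_l1norm, smul_eq_mul, abs_of_nonpos hg,
      abs_of_nonpos (by nlinarith)]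
    ring

lemma sSup_adversarial_sq_loss {m : ℕ} (θ : Fin m → ℝ) {δ : ℝ} (hδ : 0 ≤ δ)
    (x : Fin m → ℝ) (b : ℝ) :
    sSup {v | ∃ Δx : Fin m → ℝ, ‖Δx‖ ≤ δ ∧ v = (b - (x + Δx) ⬝ᵥ θ) ^ 2}
      = (|b - x ⬝ᵥ θ| + δ * l1norm θ) ^ 2 := by
  have hshift (Δx : Fin m → ℝ) : b - (x + Δx) ⬝ᵥ θ = (b - x ⬝ᵥ θ) - Δx ⬝ᵥ θ := by
    rw [add_dotProduct]; ring
  refine IsGreatest.csSup_eq ⟨?_, ?_⟩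
  · obtain ⟨Δx, hΔx, heq⟩ := exists_abs_sub_dotProduct_eq θ hδ (b - x ⬝ᵥ θ)
    exact ⟨Δx, hΔx, by rw [hshift, ← heq, sq_abs]⟩
  · rintro v ⟨Δx, hΔx, rfl⟩
    rw [hshift, ← sq_abs]
    have := (abs_dotProduct_le_norm_mul_l1norm Δx θ).trans
      (mul_le_mul_of_nonneg_right hΔx (l1norm_nonneg θ))
    gcongr
    exact (abs_sub _ _).trans (by linarith)

section Expectation

variable {Ω : Type*} [MeasurableSpace Ω] {μ : Measure Ω} [IsProbabilityMeasure μ] {g : Ω → ℝ}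

lemma integral_abs_le_sqrt_integral_sq (hg : Integrable (fun ω => g ω ^ 2) μ)
    (hg1 : Integrable (fun ω => |g ω|) μ) :
    ∫ ω, |g ω| ∂μ ≤ Real.sqrt (∫ ω, g ω ^ 2 ∂μ) := by
  have hL2 : MemLp (fun ω => |g ω|) 2 μ :=
    (memLp_two_iff_integrable_sq hg1.aestronglyMeasurable).2 (by simpa only [sq_abs] using hg)
  have hvar := ProbabilityTheory.variance_eq_sub hL2 ▸ ProbabilityTheory.variance_nonneg _ μ
  simp only [Pi.pow_apply, sq_abs] at hvar
  exact Real.le_sqrt_of_sq_le (by linarith)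

lemma sqrt_integral_abs_add_sq_le (hg : Integrable (fun ω => g ω ^ 2) μ)
    (hg1 : Integrable (fun ω => |g ω|) μ) {c : ℝ} (hc : 0 ≤ c) :
    Real.sqrt (∫ ω, (|g ω| + c) ^ 2 ∂μ) ≤ Real.sqrt (∫ ω, g ω ^ 2 ∂μ) + c := by
  have hcg : Integrable (fun ω => 2 * c * |g ω|) μ := hg1.const_mul _
  have hexpand : ∫ ω, (|g ω| + c) ^ 2 ∂μ = ∫ ω, g ω ^ 2 ∂μ + 2 * c * ∫ ω, |g ω| ∂μ + c ^ 2 := by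
    have hpt : (fun ω => (|g ω| + c) ^ 2) = fun ω => (g ω ^ 2 + 2 * c * |g ω|) + c ^ 2 := by
      funext ω; rw [add_sq, sq_abs]; ring
    rw [hpt, integral_add (f := fun ω => g ω ^ 2 + 2 * c * |g ω|) (hg.add hcg)
      (integrable_const _), integral_add hg hcg,
      integral_const_mul, integral_const, probReal_univ, one_smul]
  have hsq : Real.sqrt (∫ ω, g ω ^ 2 ∂μ) ^ 2 = ∫ ω, g ω ^ 2 ∂μ :=
    Real.sq_sqrt (integral_nonneg fun ω => sq_nonneg _)
  have hCS := integral_abs_le_sqrt_integral_sq hg hg1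
  rw [Real.sqrt_le_iff, hexpand]
  exact ⟨by positivity, by nlinarith⟩

end Expectation

lemma eq_zero_of_dotProduct_nonpos_of_norm_vecMul_le_one {m k : Type*} [Fintype m] [Fintype k]
    (X : Matrix m k ℝ) {y : m → ℝ} (h : ∀ α : m → ℝ, ‖α ᵥ* X‖ ≤ 1 → α ⬝ᵥ y ≤ 0) : y = 0 := by
  set t : ℝ := (‖y ᵥ* X‖ + 1)⁻¹
  have ht : 0 < t := by positivity
  have hfeas : ‖(t • y) ᵥ* X‖ ≤ 1 := by
    rw [smul_vecMul, norm_smul, Real.norm_of_nonneg ht.le, inv_mul_le_one₀ (by positivity)]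
    linarith
  have hyy : y ⬝ᵥ y ≤ 0 := by
    have := h (t • y) hfeas
    rw [smul_dotProduct, smul_eq_mul] at this
    exact nonpos_of_mul_nonpos_right this ht
  exact dotProduct_self_eq_zero.mp (le_antisymm hyy (dotProduct_self_star_nonneg y))

lemma advRiskL2_of_mulVec_eq {n p : ℕ} (hn : n ≠ 0) {X : Matrix (Fin n) (Fin p) ℝ}
    {y : Fin n → ℝ} {θ : Fin p → ℝ} (hθ : X *ᵥ θ = y) (δ : ℝ) :
    advRiskL2 X y δ θ = (δ * l2norm θ) ^ 2 := by
  have hfit (i : Fin n) : y i - X i ⬝ᵥ θ = 0 := by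
    rw [← hθ]; exact sub_self _
  simp only [advRiskL2, hfit, abs_zero, zero_add, Finset.sum_const, Finset.card_univ,
    Fintype.card_fin, nsmul_eq_mul]
  field_simp

/- On `Fin m → ℝ` the default norm `‖·‖` is the sup (ℓ∞) norm. -/
theorem stmt10_general {n p : ℕ}
    (X : Matrix (Fin n) (Fin p) ℝ) (y : Fin n → ℝ)
    -- θh is the minimum ℓ₁-norm interpolator
    (θh : Fin p → ℝ) (hθh_feas : X *ᵥ θh = y)
    (hθh_opt : ∀ θ : Fin p → ℝ, X *ᵥ θ = y → l1norm θh ≤ l1norm θ)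
    -- α̂ is the dual optimum: maximize αᵀy subject to ‖αᵀX‖_∞ ≤ 1
    (αh : Fin n → ℝ)
    (hαh_opt : ∀ α : Fin n → ℝ, ‖α ᵥ* X‖ ≤ 1 → α ⬝ᵥ y ≤ αh ⬝ᵥ y)
    (δbar : ℝ) (hδbar : δbar = 1 / (n * ‖αh‖))
    (δtest : ℝ) (hδtest : 0 < δtest)
    {Ω : Type*} [MeasurableSpace Ω] (μ : Measure Ω) [IsProbabilityMeasure μ]
    (x0 : Ω → Fin p → ℝ) (y0 : Ω → ℝ)
    (hg : Integrable (fun ω => (y0 ω - x0 ω ⬝ᵥ θh) ^ 2) μ)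
    (hg1 : Integrable (fun ω => |y0 ω - x0 ω ⬝ᵥ θh|) μ) :
    Real.sqrt (∫ ω,
        sSup {v | ∃ Δx : Fin p → ℝ, ‖Δx‖ ≤ δtest ∧ v = (y0 ω - (x0 ω + Δx) ⬝ᵥ θh) ^ 2} ∂μ) -
      Real.sqrt (∫ ω, (y0 ω - x0 ω ⬝ᵥ θh) ^ 2 ∂μ) ≤
      Real.sqrt p * (δtest / δbar) * Real.sqrt (advRiskL2 X y δbar θh) := by
  simp only [sSup_adversarial_sq_loss θh hδtest.le]
  rcases eq_or_ne δbar 0 with hδbar0 | hδbar0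
  · have hαh : αh = 0 := by
      rcases eq_or_ne n 0 with rfl | hn
      · exact Subsingleton.elim _ _
      · simpa [hδbar, hn] using hδbar0
    have hy : y = 0 := eq_zero_of_dotProduct_nonpos_of_norm_vecMul_le_one X fun α hα => by
      simpa [hαh] using hαh_opt α hα
    have hθh : l1norm θh = 0 :=
      le_antisymm (by simpa using hθh_opt 0 (by simp [hy])) (l1norm_nonneg θh)
    simp [hθh, hδbar0]
  · have hn : n ≠ 0 := by rintro rfl; simp [hδbar] at hδbar0
    have hδbar_nonneg : 0 ≤ δbar := hδbar ▸ by positivity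
    rw [advRiskL2_of_mulVec_eq hn hθh_feas,
      Real.sqrt_sq (mul_nonneg hδbar_nonneg (l2norm_nonneg θh))]
    calc _ ≤ δtest * l1norm θh := by
          linarith [sqrt_integral_abs_add_sq_le hg hg1 (mul_nonneg hδtest.le (l1norm_nonneg θh))]
      _ ≤ δtest * (Real.sqrt p * l2norm θh) := by
          gcongr; exact l1norm_le_sqrt_mul_l2norm θh
      _ = _ := by field_simp

theorem stmt10 {n p : ℕ} (hn : 0 < n)
    (X : Matrix (Fin n) (Fin p) ℝ) (y : Fin n → ℝ)
    (hrank : X.rank = n)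
    -- θh is the minimum ℓ₁-norm interpolator
    (θh : Fin p → ℝ) (hθh_feas : X *ᵥ θh = y)
    (hθh_opt : ∀ θ : Fin p → ℝ, X *ᵥ θ = y → l1norm θh ≤ l1norm θ)
    -- α̂ is the dual optimum: maximize αᵀy subject to ‖αᵀX‖_∞ ≤ 1
    (αh : Fin n → ℝ) (hαh_feas : ‖αh ᵥ* X‖ ≤ 1)
    (hαh_opt : ∀ α : Fin n → ℝ, ‖α ᵥ* X‖ ≤ 1 → α ⬝ᵥ y ≤ αh ⬝ᵥ y)
    (δbar : ℝ) (hδbar : δbar = 1 / (n * ‖αh‖))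
    (δtest : ℝ) (hδtest : 0 < δtest)
    {Ω : Type*} [MeasurableSpace Ω] (μ : Measure Ω) [IsProbabilityMeasure μ]
    (x0 : Ω → Fin p → ℝ) (y0 : Ω → ℝ)
    (hg : Integrable (fun ω => (y0 ω - x0 ω ⬝ᵥ θh) ^ 2) μ)
    (hg1 : Integrable (fun ω => |y0 ω - x0 ω ⬝ᵥ θh|) μ)
    (hf : Integrable (fun ω =>
      sSup {v | ∃ Δx : Fin p → ℝ, ‖Δx‖ ≤ δtest ∧ v = (y0 ω - (x0 ω + Δx) ⬝ᵥ θh) ^ 2}) μ) :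
    Real.sqrt (∫ ω,
        sSup {v | ∃ Δx : Fin p → ℝ, ‖Δx‖ ≤ δtest ∧ v = (y0 ω - (x0 ω + Δx) ⬝ᵥ θh) ^ 2} ∂μ) -
      Real.sqrt (∫ ω, (y0 ω - x0 ω ⬝ᵥ θh) ^ 2 ∂μ) ≤
      Real.sqrt p * (δtest / δbar) * Real.sqrt (advRiskL2 X y δbar θh) :=
  stmt10_general X y θh hθh_feas hθh_opt αh hαh_opt δbar hδbar δtest hδtest μ x0 y0 hg hg1
end

section
/- Suppose y = Xθ* + ε with X ∈ ℝ^{n×p}, and let θ̂ minimize R^adv(θ) = (1/n)∑ᵢ(|yᵢ - xᵢᵀθ| + δ‖θ‖₁)². If δ > 3‖Xᵀε‖_∞/‖ε‖₁, then ‖θ̂‖₁ ≤ 8‖θ*‖₁. -/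
open Matrix

/-- The ℓ∞-adversarial training risk, `(1/n) ∑ᵢ (|yᵢ - xᵢᵀθ| + δ‖θ‖₁)²`
(the ℓ₁-norm is the dual of the ℓ∞-norm). -/
noncomputable def advRiskL1 {n p : ℕ} (X : Matrix (Fin n) (Fin p) ℝ) (y : Fin n → ℝ)
    (δ : ℝ) (θ : Fin p → ℝ) : ℝ :=
  (1 / n : ℝ) * ∑ i, (|y i - X i ⬝ᵥ θ| + δ * ∑ j, |θ j|) ^ 2

/-!
Comparing the risk of `θ̂` with that of `θ*` gives `∑ aᵢ² ≤ ∑ bᵢ²` for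
`aᵢ = |rᵢ| + δ‖θ̂‖₁`, `bᵢ = |εᵢ| + δ‖θ*‖₁`, where `r = y - Xθ̂`; by convexity of the square this
yields `∑ bᵢ (aᵢ - bᵢ) ≤ 0`. Expanding, and using `ε - r = X(θ̂ - θ*)` together with the
ℓ∞/ℓ₁ duality `⟨Xᵀε, θ̂ - θ*⟩ ≤ ‖Xᵀε‖_∞ (‖θ̂‖₁ + ‖θ*‖₁)`, one gets for `‖θ̂‖₁ > ‖θ*‖₁`
`δ (‖θ̂‖₁ - 2‖θ*‖₁) ‖ε‖₁ ≤ ‖Xᵀε‖_∞ (‖θ̂‖₁ + ‖θ*‖₁) < δ ‖ε‖₁ (‖θ̂‖₁ + ‖θ*‖₁) / 3`,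
that is `‖θ̂‖₁ < 7/2 ‖θ*‖₁`.
-/

open Finset

theorem sum_mul_sub_nonpos_of_sum_sq_le {ι : Type*} (s : Finset ι) (a b : ι → ℝ)
    (hab : ∑ i ∈ s, a i ^ 2 ≤ ∑ i ∈ s, b i ^ 2) :
    ∑ i ∈ s, b i * (a i - b i) ≤ 0 := by
  have hpoint : ∀ i ∈ s, b i * (a i - b i) ≤ (a i ^ 2 - b i ^ 2) / 2 := fun i _ => by
    nlinarith [sq_nonneg (a i - b i)]
  calc ∑ i ∈ s, b i * (a i - b i) ≤ ∑ i ∈ s, (a i ^ 2 - b i ^ 2) / 2 := sum_le_sum hpoint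
    _ = (∑ i ∈ s, a i ^ 2 - ∑ i ∈ s, b i ^ 2) / 2 := by rw [← sum_div, sum_sub_distrib]
    _ ≤ 0 := by linarith

theorem mul_sub_add_le_abs_add_mul_sub {e r c c' : ℝ} (hc : 0 ≤ c) :
    e * (r - e) + (c' - 2 * c) * |e| + c * (c' - c) ≤ (|e| + c) * (|r| + c' - (|e| + c)) := by
  nlinarith [abs_mul e r, le_abs_self (e * r), mul_nonneg hc (abs_nonneg r), sq_abs e]

theorem dotProduct_le_norm_mul_sum_abs {ι : Type*} [Fintype ι] (v w : ι → ℝ) :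
    v ⬝ᵥ w ≤ ‖v‖ * ∑ j, |w j| := by
  rw [mul_sum]
  refine sum_le_sum fun j _ => ?_
  calc v j * w j ≤ |v j| * |w j| := by rw [← abs_mul]; exact le_abs_self _
    _ ≤ ‖v‖ * |w j| := mul_le_mul_of_nonneg_right (norm_le_pi_norm v j) (abs_nonneg _)

theorem sum_abs_sub_le {ι : Type*} [Fintype ι] (v w : ι → ℝ) :
    ∑ j, |(v - w) j| ≤ ∑ j, |v j| + ∑ j, |w j| := by
  rw [← sum_add_distrib]
  exact sum_le_sum fun j _ => abs_sub (v j) (w j)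

theorem le_dotProduct_sub_of_sum_sq_le {ι : Type*} [Fintype ι]
    (ε r : ι → ℝ) {δ h t : ℝ} (hδ : 0 ≤ δ) (ht : 0 ≤ t)
    (hle : ∑ i, (|r i| + δ * h) ^ 2 ≤ ∑ i, (|ε i| + δ * t) ^ 2) :
    δ * (h - 2 * t) * ∑ i, |ε i| + Fintype.card ι * (δ * t * (δ * (h - t))) ≤ ε ⬝ᵥ (ε - r) := by
  have hconv := sum_mul_sub_nonpos_of_sum_sq_le univ
    (fun i => |r i| + δ * h) (fun i => |ε i| + δ * t) hle
  have hsum := sum_le_sum fun i (_ : i ∈ univ) =>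
    mul_sub_add_le_abs_add_mul_sub (e := ε i) (r := r i) (c' := δ * h) (mul_nonneg hδ ht)
  simp only [sum_add_distrib, ← mul_sum, sum_const, card_univ, nsmul_eq_mul] at hsum
  have hdot : ε ⬝ᵥ (ε - r) = -∑ i, ε i * (r i - ε i) := by
    simp only [dotProduct, Pi.sub_apply, ← sum_neg_distrib]
    exact sum_congr rfl fun i _ => by ring
  rw [hdot]
  linarith

theorem advRiskL1_le_iff {n p : ℕ} (hn : 0 < n) (X : Matrix (Fin n) (Fin p) ℝ) (y : Fin n → ℝ)
    (δ : ℝ) (θ θ' : Fin p → ℝ) :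
    advRiskL1 X y δ θ ≤ advRiskL1 X y δ θ' ↔
      ∑ i, (|(y - X *ᵥ θ) i| + δ * ∑ j, |θ j|) ^ 2 ≤
        ∑ i, (|(y - X *ᵥ θ') i| + δ * ∑ j, |θ' j|) ^ 2 :=
  mul_le_mul_iff_right₀ (by positivity)

theorem stmt16 {n p : ℕ} (X : Matrix (Fin n) (Fin p) ℝ)
    (θstar : Fin p → ℝ) (ε : Fin n → ℝ) (hε : ε ≠ 0)
    (y : Fin n → ℝ) (hy : y = X *ᵥ θstar + ε)
    (δ : ℝ) (hδ : 3 * ‖Xᵀ *ᵥ ε‖ / (∑ i, |ε i|) < δ)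
    (θh : Fin p → ℝ)
    (hθh : ∀ θ : Fin p → ℝ, advRiskL1 X y δ θh ≤ advRiskL1 X y δ θ) :
    (∑ j, |θh j|) ≤ 8 * ∑ j, |θstar j| := by
  set h := ∑ j, |θh j|
  set t := ∑ j, |θstar j|
  set E := ∑ i, |ε i|
  set G := ‖Xᵀ *ᵥ ε‖
  obtain ⟨i₀, hi₀⟩ := Function.ne_iff.mp hε
  have hE : 0 < E := sum_pos' (fun i _ => abs_nonneg _) ⟨i₀, mem_univ _, abs_pos.2 hi₀⟩
  have hδ0 : 0 < δ := lt_of_le_of_lt (by positivity) hδ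
  have hG : 3 * G < δ * E := (div_lt_iff₀ hE).1 hδ
  have ht : 0 ≤ t := sum_nonneg fun j _ => abs_nonneg _
  have hbasic := (advRiskL1_le_iff i₀.pos X y δ θh θstar).1 (hθh θstar)
  rw [show y - X *ᵥ θstar = ε by rw [hy]; abel] at hbasic
  have hkey : δ * (h - 2 * t) * E + n * (δ * t * (δ * (h - t))) ≤ ε ⬝ᵥ (ε - (y - X *ᵥ θh)) := by
    simpa using le_dotProduct_sub_of_sum_sq_le ε _ hδ0.le ht hbasic
  have hdual : ε ⬝ᵥ (ε - (y - X *ᵥ θh)) ≤ G * (h + t) := by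
    rw [show ε - (y - X *ᵥ θh) = X *ᵥ (θh - θstar) by rw [hy, mulVec_sub]; abel,
      dotProduct_mulVec, ← mulVec_transpose]
    exact (dotProduct_le_norm_mul_sum_abs _ _).trans
      (mul_le_mul_of_nonneg_left (sum_abs_sub_le _ _) (norm_nonneg _))
  rcases le_or_gt h t with hht | hht
  · linarith
  have hquad : 0 ≤ (n : ℝ) * (δ * t * (δ * (h - t))) := by
    have : 0 ≤ h - t := by linarith
    positivity
  have hGE : 3 * G * (h + t) ≤ δ * E * (h + t) := by gcongr
  have : δ * E * (2 * h - 7 * t) ≤ 0 := by linarith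
  linarith [nonpos_of_mul_nonpos_right this (mul_pos hδ0 hE)]
end

section
/- Suppose y = Xθ* + ε, and let θ̂ minimize (1/n)∑ᵢ(|yᵢ - xᵢᵀθ| + δ‖θ‖₁)². If δ > 3‖Xᵀε‖_∞/‖ε‖₁, then the in-sample prediction error satisfies (1/n)‖X(θ̂ - θ*)‖₂² ≤ 8δ‖θ*‖₁·((1/n)‖ε‖₁ + 10δ‖θ*‖₁). -/
open Matrix

/-- Pure real-arithmetic core of the slow-rate bound. -/
lemma key_ineq (N Q D v u E δ IP Sb : ℝ) (hN : 1 ≤ N) (hE : 0 < E) (hδ : 0 < δ)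
    (hu : 0 ≤ u) (hv : 0 ≤ v) (hQ : 0 ≤ Q) (hD : 0 ≤ D) (hSb0 : 0 ≤ Sb)
    (h1 : Q + 2*δ*v*Sb + N*δ^2*v^2 ≤ 2*IP + 2*δ*u*E + N*δ^2*u^2)
    (h2 : IP ≤ δ*E/3*(u+v))
    (h3 : E - D ≤ Sb)
    (h4 : D^2 ≤ N*Q) :
    Q ≤ 8*δ*u*E + 80*N*δ^2*u^2 := by
  have h3' : 2*δ*v*(E-D) ≤ 2*δ*v*Sb :=
    mul_le_mul_of_nonneg_left h3 (by positivity)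
  have hB : Q + 2*δ*v*E - 2*δ*v*D + N*δ^2*v^2 ≤ 2*(δ*E/3*(u+v)) + 2*δ*u*E + N*δ^2*u^2 := by
    nlinarith [h1, h2, h3']
  have hN0 : (0:ℝ) < N := by linarith
  -- bound on v : (4/3) N δ E v ≤ (8/3) N δ E u + N² δ² u²
  have hvb : 4*N*(δ*E*v) ≤ 8*N*(δ*E*u) + 3*N^2*δ^2*u^2 := by
    nlinarith [mul_le_mul_of_nonneg_left hB hN0.le, sq_nonneg (N*δ*v - D), h4]
  -- base bound on Q
  have hC : Q ≤ 2*(δ*E/3*(u+v)) + 2*δ*u*E + N*δ^2*u^2 := by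
    nlinarith [h1, h2, mul_nonneg (mul_nonneg (mul_nonneg (by norm_num : (0:ℝ) ≤ 2) hδ.le) hv) hSb0,
      mul_nonneg (mul_nonneg hN0.le (sq_nonneg δ)) (sq_nonneg v)]
  -- combine: N*Q ≤ N*(8 δ u E + 80 N δ² u²)
  have hNQ : N*Q ≤ N*(8*δ*u*E + 80*N*δ^2*u^2) := by
    nlinarith [mul_le_mul_of_nonneg_left hC hN0.le, hvb,
      mul_nonneg (mul_nonneg hN0.le (mul_nonneg hδ.le hE.le)) hu,
      mul_nonneg (mul_nonneg (mul_nonneg hN0.le hN0.le) (sq_nonneg δ)) (sq_nonneg u)]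
  exact le_of_mul_le_mul_left hNQ hN0

/- On `Fin p → ℝ` the default norm `‖·‖` is the sup (ℓ∞) norm, so
`‖Xᵀ *ᵥ ε‖ = ‖Xᵀε‖_∞`. -/
theorem stmt17 {n p : ℕ} (X : Matrix (Fin n) (Fin p) ℝ)
    (θstar : Fin p → ℝ) (ε : Fin n → ℝ) (hε : ε ≠ 0)
    (y : Fin n → ℝ) (hy : y = X *ᵥ θstar + ε)
    (δ : ℝ) (hδ : 3 * ‖Xᵀ *ᵥ ε‖ / (∑ i, |ε i|) < δ)
    (θh : Fin p → ℝ)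
    (hθh : ∀ θ : Fin p → ℝ, advRiskL1 X y δ θh ≤ advRiskL1 X y δ θ) :
    (1 / n : ℝ) * ∑ i, (X *ᵥ (θh - θstar)) i ^ 2 ≤
      8 * δ * (∑ j, |θstar j|) *
        ((1 / n : ℝ) * (∑ i, |ε i|) + 10 * δ * ∑ j, |θstar j|) := by
  classical
  obtain ⟨i₀, hi₀⟩ := Function.ne_iff.mp hε
  have hn : 0 < n := i₀.pos
  set N : ℝ := (n : ℝ) with hNdef
  have hN1 : (1:ℝ) ≤ N := Nat.one_le_cast.mpr hn
  have hN0 : (0:ℝ) < N := by linarith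
  set E : ℝ := ∑ i, |ε i| with hEdef
  have hE : 0 < E := Finset.sum_pos' (fun i _ => abs_nonneg _)
    ⟨i₀, Finset.mem_univ _, abs_pos.mpr hi₀⟩
  have hδ0 : 0 < δ := lt_of_le_of_lt (by positivity) hδ
  have hXε : ‖Xᵀ *ᵥ ε‖ ≤ δ * E / 3 := by
    rw [div_lt_iff₀ hE] at hδ
    linarith
  set u : ℝ := ∑ j, |θstar j| with hudef
  set v : ℝ := ∑ j, |θh j| with hvdef
  have hu : 0 ≤ u := Finset.sum_nonneg fun j _ => abs_nonneg _
  have hv : 0 ≤ v := Finset.sum_nonneg fun j _ => abs_nonneg _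
  set w : Fin n → ℝ := X *ᵥ (θh - θstar) with hwdef
  set Q : ℝ := ∑ i, w i ^ 2 with hQdef
  set D : ℝ := ∑ i, |w i| with hDdef
  set IP : ℝ := ∑ i, ε i * w i with hIPdef
  set Sb : ℝ := ∑ i, |ε i - w i| with hSbdef
  have hQ : 0 ≤ Q := Finset.sum_nonneg fun i _ => sq_nonneg _
  have hD : 0 ≤ D := Finset.sum_nonneg fun i _ => abs_nonneg _
  have hSb0 : 0 ≤ Sb := Finset.sum_nonneg fun i _ => abs_nonneg _
  -- residuals
  have hres_star : ∀ i, y i - X i ⬝ᵥ θstar = ε i := by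
    intro i; rw [hy]; show (X *ᵥ θstar) i + ε i - X i ⬝ᵥ θstar = ε i
    show X i ⬝ᵥ θstar + ε i - X i ⬝ᵥ θstar = ε i; ring
  have hres_h : ∀ i, y i - X i ⬝ᵥ θh = ε i - w i := by
    intro i
    have hw : w i = X i ⬝ᵥ θh - X i ⬝ᵥ θstar := by
      rw [hwdef, Matrix.mulVec_sub]; rfl
    rw [hy]
    show (X *ᵥ θstar) i + ε i - X i ⬝ᵥ θh = ε i - w i
    show X i ⬝ᵥ θstar + ε i - X i ⬝ᵥ θh = ε i - w i
    rw [hw]; ring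
  -- the minimality inequality, cleared of the 1/n factor
  have hmin : ∑ i, (|ε i - w i| + δ * v) ^ 2 ≤ ∑ i, (|ε i| + δ * u) ^ 2 := by
    have h := hθh θstar
    unfold advRiskL1 at h
    simp_rw [hres_star, hres_h] at h
    have h1n : (0:ℝ) < 1 / N := by positivity
    exact le_of_mul_le_mul_left (by exact_mod_cast h) h1n
  -- expansions
  have expand1 : ∑ i, (|ε i - w i| + δ * v) ^ 2
      = (∑ i, ε i ^ 2) - 2 * IP + Q + 2 * δ * v * Sb + N * δ ^ 2 * v ^ 2 := by
    have : ∀ i, (|ε i - w i| + δ * v) ^ 2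
        = (ε i ^ 2 - 2 * (ε i * w i) + w i ^ 2) + 2 * δ * v * |ε i - w i| + δ ^ 2 * v ^ 2 := by
      intro i
      rw [add_sq, sq_abs]
      ring
    simp_rw [this, Finset.sum_add_distrib, Finset.sum_sub_distrib, Finset.sum_const,
      Finset.card_univ, Fintype.card_fin, ← Finset.mul_sum, nsmul_eq_mul]
    rw [hIPdef, hQdef, hSbdef, hNdef]
    ring
  have expand2 : ∑ i, (|ε i| + δ * u) ^ 2
      = (∑ i, ε i ^ 2) + 2 * δ * u * E + N * δ ^ 2 * u ^ 2 := by
    have : ∀ i, (|ε i| + δ * u) ^ 2 = ε i ^ 2 + 2 * δ * u * |ε i| + δ ^ 2 * u ^ 2 := by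
      intro i; rw [add_sq, sq_abs]; ring
    simp_rw [this, Finset.sum_add_distrib, Finset.sum_const, Finset.card_univ,
      Fintype.card_fin, ← Finset.mul_sum, nsmul_eq_mul]
    rw [hEdef, hNdef]; ring
  have h1 : Q + 2*δ*v*Sb + N*δ^2*v^2 ≤ 2*IP + 2*δ*u*E + N*δ^2*u^2 := by
    rw [expand1, expand2] at hmin; linarith
  -- inner product bound
  have h2 : IP ≤ δ*E/3*(u+v) := by
    have hIP2 : IP = ∑ j, (Xᵀ *ᵥ ε) j * (θh j - θstar j) := by
      have : IP = ε ⬝ᵥ (X *ᵥ (θh - θstar)) := by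
        rw [hIPdef]; rfl
      rw [this, Matrix.dotProduct_mulVec, ← Matrix.mulVec_transpose]
      rfl
    have hptwise : ∀ j, (Xᵀ *ᵥ ε) j * (θh j - θstar j) ≤ (δ*E/3) * (|θh j| + |θstar j|) := by
      intro j
      calc (Xᵀ *ᵥ ε) j * (θh j - θstar j) ≤ |(Xᵀ *ᵥ ε) j * (θh j - θstar j)| := le_abs_self _
        _ = |(Xᵀ *ᵥ ε) j| * |θh j - θstar j| := abs_mul _ _
        _ ≤ (δ*E/3) * (|θh j| + |θstar j|) := by
            apply mul_le_mul
            · calc |(Xᵀ *ᵥ ε) j| = ‖(Xᵀ *ᵥ ε) j‖ := rfl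
                _ ≤ ‖Xᵀ *ᵥ ε‖ := norm_le_pi_norm _ j
                _ ≤ δ * E / 3 := hXε
            · exact abs_sub _ _
            · exact abs_nonneg _
            · positivity
    calc IP ≤ ∑ j, (δ*E/3) * (|θh j| + |θstar j|) := by
          rw [hIP2]; exact Finset.sum_le_sum fun j _ => hptwise j
      _ = δ*E/3*(u+v) := by
          rw [← Finset.mul_sum, Finset.sum_add_distrib, ← hvdef, ← hudef]; ring
  -- triangle inequality bound on Sb
  have h3 : E - D ≤ Sb := by
    rw [hEdef, hDdef, hSbdef, ← Finset.sum_sub_distrib]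
    exact Finset.sum_le_sum fun i _ => abs_sub_abs_le_abs_sub _ _
  -- Cauchy–Schwarz
  have h4 : D^2 ≤ N*Q := by
    have := sq_sum_le_card_mul_sum_sq (s := (Finset.univ : Finset (Fin n)))
      (f := fun i => |w i|)
    simp only [Finset.card_univ, Fintype.card_fin, sq_abs] at this
    rw [hDdef, hQdef, hNdef]
    exact_mod_cast this
  have hkey := key_ineq N Q D v u E δ IP Sb hN1 hE hδ0 hu hv hQ hD hSb0 h1 h2 h3 h4
  -- conclude
  have hrw : 8 * δ * u * ((1 / N) * E + 10 * δ * u) = (1/N) * (8*δ*u*E + 80*N*δ^2*u^2) := by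
    field_simp
    ring
  calc (1 / N) * Q ≤ (1/N) * (8*δ*u*E + 80*N*δ^2*u^2) := by
        apply mul_le_mul_of_nonneg_left hkey (by positivity)
    _ = 8 * δ * u * ((1 / N) * E + 10 * δ * u) := hrw.symm
end
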